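/- Let k be a field, X a finitely generated free abelian group, A = S_k(X) the symmetric algebra of X over k, and α ∈ X, α̌ ∈ Hom(X,ℤ) with ⟨α,α̌⟩ = 2; let s_α be the k-algebra automorphism of A induced by x ↦ x − ⟨x,α̌⟩α, and Δ_α : A → A the unique map with α·Δ_α(f) = f − s_α(f). Let V be a finite-dimensional k-vector space, ρ : A → End_k(V) a k-algebra homomorphism, c ∈ k, and T ∈ End_k(V) satisfying T∘ρ(f) − ρ(s_α(f))∘T = c·ρ(Δ_α(f)) for all f ∈ A, and assume additionally that T∘T = id_V. Let λ : A → k be a k-algebra homomorphism with λ∘s_α ≠ λ. For v ∈ V_λ, write Tv = w + u with w ∈ V_λ and u ∈ V_{λ∘s_α} (this decomposition exists and is unique), and then write Tu = z + u' with z ∈ V_λ and u' ∈ V_{λ∘s_α}. Then ρ(α)²(z) = ρ(α²)(v) − c²·v. -/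
import Mathlib


open scoped BigOperators

/-- The embedding of the free abelian group `X = (Fin n → ℤ)` into its symmetric algebra
`S_k(X) = k[X_1,…,X_n]` over `k`. -/
noncomputable def symEmb (k : Type*) [Field k] (n : ℕ) (x : Fin n → ℤ) :
    MvPolynomial (Fin n) k :=
  ∑ i, x i • MvPolynomial.X i

/-- The generalized weight space of a weight `lam : A → k` in a representation
`ρ : A → End_k(V)`. -/
def genWt {k V A : Type*} [Field k] [AddCommGroup V] [Module k V]
    [CommRing A] [Algebra k A]
    (ρ : A →ₐ[k] Module.End k V) (lam : A →ₐ[k] k) : Set V :=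
  {v | ∀ f : A, ∃ m : ℕ, ((ρ f - lam f • (1 : Module.End k V)) ^ m) v = 0}

section Aux

variable {k V A : Type*} [Field k] [AddCommGroup V] [Module k V]
  [CommRing A] [Algebra k A] (ρ : A →ₐ[k] Module.End k V)

/-- `f - μ(f)` as an element of `A`. -/
def dd (μ : A →ₐ[k] k) (f : A) : A := f - algebraMap k A (μ f)

lemma rho_mul_apply (x y : A) (v : V) : ρ (x * y) v = ρ x (ρ y v) := by
  rw [map_mul]; rfl

lemma rho_algebraMap_apply (r : k) (v : V) : ρ (algebraMap k A r) v = r • v := by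
  rw [AlgHom.commutes]; exact Module.algebraMap_end_apply k k V r v

lemma rho_dd (μ : A →ₐ[k] k) (f : A) :
    ρ (dd μ f) = ρ f - μ f • (1 : Module.End k V) := by
  ext v
  simp [dd, map_sub, rho_algebraMap_apply]

lemma mem_genWt_iff (μ : A →ₐ[k] k) (v : V) :
    v ∈ genWt ρ μ ↔ ∀ f : A, ∃ m : ℕ, ρ ((dd μ f) ^ m) v = 0 := by
  unfold genWt
  simp only [Set.mem_setOf_eq, ← rho_dd, map_pow]

lemma genWt_zero (μ : A →ₐ[k] k) : (0 : V) ∈ genWt ρ μ := by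
  intro f; exact ⟨1, by simp⟩

lemma rho_pow_pad {h : A} {m : ℕ} {v : V} (hv : ρ (h ^ m) v = 0) {M : ℕ} (hM : m ≤ M) :
    ρ (h ^ M) v = 0 := by
  have : h ^ M = h ^ (M - m) * h ^ m := by rw [← pow_add, Nat.sub_add_cancel hM]
  rw [this, rho_mul_apply, hv, map_zero]

lemma genWt_add (μ : A →ₐ[k] k) {v w : V} (hv : v ∈ genWt ρ μ) (hw : w ∈ genWt ρ μ) :
    v + w ∈ genWt ρ μ := by
  rw [mem_genWt_iff] at hv hw ⊢
  intro f
  obtain ⟨m₁, h₁⟩ := hv f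
  obtain ⟨m₂, h₂⟩ := hw f
  exact ⟨max m₁ m₂, by rw [map_add, rho_pow_pad ρ h₁ (le_max_left _ _),
    rho_pow_pad ρ h₂ (le_max_right _ _), add_zero]⟩

lemma genWt_smul (μ : A →ₐ[k] k) (r : k) {v : V} (hv : v ∈ genWt ρ μ) :
    r • v ∈ genWt ρ μ := by
  rw [mem_genWt_iff] at hv ⊢
  intro f
  obtain ⟨m, h⟩ := hv f
  exact ⟨m, by rw [map_smul, h, smul_zero]⟩

lemma genWt_neg (μ : A →ₐ[k] k) {v : V} (hv : v ∈ genWt ρ μ) : -v ∈ genWt ρ μ := by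
  have := genWt_smul ρ μ (-1) hv
  simpa using this

lemma genWt_sub (μ : A →ₐ[k] k) {v w : V} (hv : v ∈ genWt ρ μ) (hw : w ∈ genWt ρ μ) :
    v - w ∈ genWt ρ μ := by
  rw [sub_eq_add_neg]; exact genWt_add ρ μ hv (genWt_neg ρ μ hw)

lemma genWt_rho (μ : A →ₐ[k] k) (g : A) {v : V} (hv : v ∈ genWt ρ μ) :
    ρ g v ∈ genWt ρ μ := by
  rw [mem_genWt_iff] at hv ⊢
  intro f
  obtain ⟨m, h⟩ := hv f
  refine ⟨m, ?_⟩
  rw [← rho_mul_apply, mul_comm, rho_mul_apply, h, map_zero]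

lemma isCoprime_of_sub_unit {x y : A} (h : IsUnit (y - x)) : IsCoprime x y := by
  obtain ⟨z, hz⟩ := h.exists_left_inv
  exact ⟨-z, z, by rw [← hz]; ring⟩

lemma isCoprime_sub_algebraMap {a b : k} (hab : a ≠ b) (g : A) :
    IsCoprime (g - algebraMap k A a) (g - algebraMap k A b) := by
  apply isCoprime_of_sub_unit
  have : (g - algebraMap k A b) - (g - algebraMap k A a) = algebraMap k A (a - b) := by
    rw [map_sub]; ring
  rw [this]
  exact (algebraMap k A).isUnit_map (isUnit_iff_ne_zero.mpr (sub_ne_zero.mpr hab))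

lemma bezout_kill {p q : A} (hpq : IsCoprime p q) {x : V}
    (hp : ρ p x = 0) (hq : ρ q x = 0) : x = 0 := by
  obtain ⟨u, v, huv⟩ := hpq
  have : ρ (u * p + v * q) x = x := by rw [huv, map_one]; rfl
  rw [map_add, LinearMap.add_apply, rho_mul_apply, rho_mul_apply, hp, hq,
    map_zero, map_zero, add_zero] at this
  exact this.symm

lemma kill₂ {a b : k} (hab : a ≠ b) (g : A) {m m' : ℕ} {x : V}
    (h₁ : ρ ((g - algebraMap k A a) ^ m) x = 0)
    (h₂ : ρ ((g - algebraMap k A b) ^ m') x = 0) : x = 0 :=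
  bezout_kill ρ ((isCoprime_sub_algebraMap hab g).pow) h₁ h₂

lemma kill₃ {γ γ' : k} (hγ : γ ≠ 0) (hγ' : γ' ≠ 0) (h : A) {K r : ℕ} {x : V}
    (h₁ : ρ (h ^ K) x = 0)
    (h₂ : ρ ((h + algebraMap k A γ) ^ r * (h + algebraMap k A γ') ^ r) x = 0) : x = 0 := by
  have c1 : IsCoprime h (h + algebraMap k A γ) := by
    apply isCoprime_of_sub_unit
    simp only [add_sub_cancel_left]
    exact (algebraMap k A).isUnit_map (isUnit_iff_ne_zero.mpr hγ)
  have c2 : IsCoprime h (h + algebraMap k A γ') := by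
    apply isCoprime_of_sub_unit
    simp only [add_sub_cancel_left]
    exact (algebraMap k A).isUnit_map (isUnit_iff_ne_zero.mpr hγ')
  exact bezout_kill ρ ((c1.pow (m := K) (n := r)).mul_right (c2.pow (m := K) (n := r))) h₁ h₂

lemma genWt_disjoint {μ ν : A →ₐ[k] k} {g : A} (hg : μ g ≠ ν g) {x : V}
    (hμ : x ∈ genWt ρ μ) (hν : x ∈ genWt ρ ν) : x = 0 := by
  rw [mem_genWt_iff] at hμ hν
  obtain ⟨m₁, h₁⟩ := hμ g
  obtain ⟨m₂, h₂⟩ := hν g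
  exact kill₂ ρ hg g h₁ h₂

lemma add_pow_kill {p q : A} {mp mq : ℕ} {x : V}
    (hp : ρ (p ^ mp) x = 0) (hq : ρ (q ^ mq) x = 0) :
    ρ ((p + q) ^ (mp + mq)) x = 0 := by
  rw [add_pow, map_sum, LinearMap.sum_apply]
  apply Finset.sum_eq_zero
  intro i hi
  rcases le_or_gt mp i with h | h
  · have : p ^ i * q ^ (mp + mq - i) * ((mp + mq).choose i : A)
        = (p ^ (i - mp) * q ^ (mp + mq - i) * ((mp + mq).choose i : A)) * p ^ mp := by
      rw [show p ^ i = p ^ (i - mp) * p ^ mp by rw [← pow_add, Nat.sub_add_cancel h]]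
      ring
    rw [this, rho_mul_apply, hp, map_zero]
  · have hle : mq ≤ mp + mq - i := by omega
    have : p ^ i * q ^ (mp + mq - i) * ((mp + mq).choose i : A)
        = (p ^ i * q ^ (mp + mq - i - mq) * ((mp + mq).choose i : A)) * q ^ mq := by
      rw [show q ^ (mp + mq - i) = q ^ (mp + mq - i - mq) * q ^ mq by
        rw [← pow_add, Nat.sub_add_cancel hle]]
      ring
    rw [this, rho_mul_apply, hq, map_zero]

end Aux

section Aux2

variable {k V A : Type*} [Field k] [AddCommGroup V] [Module k V]
  [CommRing A] [Algebra k A] (ρ : A →ₐ[k] Module.End k V)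

/-- If `x` is killed by a power of `ρ(dd μ g₀)` and, for each `f`, by a power of the product
`dd μ f · dd ν f`, and `μ g₀ ≠ ν g₀`, then `x` lies in the generalized weight space of `μ`. -/
lemma inWt {μ ν : A →ₐ[k] k} {g₀ : A} (hg : μ g₀ ≠ ν g₀) {x : V}
    (Hx : ∀ f : A, ∃ m : ℕ, ρ ((dd μ f) ^ m * (dd ν f) ^ m) x = 0)
    (hx1 : ∃ m₀ : ℕ, ρ ((dd μ g₀) ^ m₀) x = 0) : x ∈ genWt ρ μ := by
  rw [mem_genWt_iff]
  intro f
  obtain ⟨m, hm⟩ := Hx f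
  by_cases hf : μ f = ν f
  · refine ⟨m + m, ?_⟩
    have hdd : dd ν f = dd μ f := by rw [dd, dd, hf]
    rw [pow_add]
    nth_rewrite 2 [← hdd]
    exact hm
  · refine ⟨m, ?_⟩
    obtain ⟨m₀, h₀⟩ := hx1
    set q := ρ ((dd μ f) ^ m) x with hqdef
    -- three annihilation facts for q
    have hq1 : ρ ((dd ν f) ^ m) q = 0 := by
      rw [hqdef, ← rho_mul_apply, mul_comm, hm]
    have hq2 : ρ ((dd μ g₀) ^ m₀) q = 0 := by
      rw [hqdef, ← rho_mul_apply, mul_comm, rho_mul_apply, h₀, map_zero]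
    obtain ⟨r, hr⟩ := Hx (g₀ + f)
    have hq3 : ρ ((dd μ (g₀ + f)) ^ r * (dd ν (g₀ + f)) ^ r) q = 0 := by
      rw [hqdef, ← rho_mul_apply, mul_comm, rho_mul_apply, hr, map_zero]
    -- the nilpotent part
    set h : A := dd μ g₀ + dd ν f with hh
    have hK : ρ (h ^ (m₀ + m)) q = 0 := add_pow_kill ρ hq2 hq1
    have e1 : dd μ (g₀ + f) = h + algebraMap k A (ν f - μ f) := by
      simp only [dd, hh, map_add, map_sub]
      ring
    have e2 : dd ν (g₀ + f) = h + algebraMap k A (μ g₀ - ν g₀) := by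
      simp only [dd, hh, map_add, map_sub]
      ring
    rw [e1, e2] at hq3
    exact kill₃ ρ (sub_ne_zero.mpr (Ne.symm hf)) (sub_ne_zero.mpr hg) h hK hq3

/-- Splitting a vector annihilated by powers of `dd μ f · dd ν f` into generalized weight
vectors for `μ` and `ν`. -/
lemma splitWt {μ ν : A →ₐ[k] k} {g₀ : A} (hg : μ g₀ ≠ ν g₀) {x : V}
    (Hx : ∀ f : A, ∃ m : ℕ, ρ ((dd μ f) ^ m * (dd ν f) ^ m) x = 0) :
    ∃ w ∈ genWt ρ μ, ∃ u ∈ genWt ρ ν, x = w + u := by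
  obtain ⟨m₀, hm₀⟩ := Hx g₀
  have hcop : IsCoprime ((dd μ g₀) ^ m₀) ((dd ν g₀) ^ m₀) :=
    (isCoprime_sub_algebraMap hg g₀).pow
  obtain ⟨e₁, e₂, he⟩ := hcop
  set P : A := (dd μ g₀) ^ m₀
  set Q : A := (dd ν g₀) ^ m₀
  refine ⟨ρ (e₂ * Q) x, ?_, ρ (e₁ * P) x, ?_, ?_⟩
  · -- w ∈ genWt μ
    refine inWt ρ hg (fun f => ?_) ⟨m₀, ?_⟩
    · obtain ⟨m, hm⟩ := Hx f
      exact ⟨m, by rw [← rho_mul_apply, mul_comm, rho_mul_apply, hm, map_zero]⟩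
    · rw [← rho_mul_apply, show P * (e₂ * Q) = e₂ * (P * Q) by ring, rho_mul_apply,
        hm₀, map_zero]
  · -- u ∈ genWt ν
    refine inWt ρ (Ne.symm hg) (fun f => ?_) ⟨m₀, ?_⟩
    · obtain ⟨m, hm⟩ := Hx f
      refine ⟨m, ?_⟩
      rw [← rho_mul_apply, show (dd ν f) ^ m * (dd μ f) ^ m * (e₁ * P)
        = e₁ * P * ((dd μ f) ^ m * (dd ν f) ^ m) by ring, rho_mul_apply, hm, map_zero]
    · rw [← rho_mul_apply, show Q * (e₁ * P) = e₁ * (P * Q) by ring, rho_mul_apply,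
        hm₀, map_zero]
  · have h1 : ρ (e₁ * P + e₂ * Q) x = x := by rw [he, map_one]; rfl
    rw [map_add, LinearMap.add_apply] at h1
    conv_lhs => rw [← h1]
    exact add_comm _ _

end Aux2

section Aux3

variable {k V A : Type*} [Field k] [AddCommGroup V] [Module k V]
  [CommRing A] [Algebra k A] (ρ : A →ₐ[k] Module.End k V)

lemma hTg_pointwise {s : A ≃ₐ[k] A} {Δ : A → A} {c : k} {T : Module.End k V}
    (hT : ∀ f, T * ρ f - ρ (s f) * T = c • ρ (Δ f)) (g : A) (z : V) :
    T (ρ g z) = c • ρ (Δ g) z + ρ (s g) (T z) := by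
  have h := congrArg (fun L : Module.End k V => L z) (hT g)
  simp only [LinearMap.sub_apply, Module.End.mul_apply, LinearMap.smul_apply] at h
  exact eq_add_of_sub_eq h

lemma tshift {s : A ≃ₐ[k] A} (hss : ∀ f, s (s f) = f) {Δ : A → A} {c : k}
    {T : Module.End k V}
    (hT : ∀ f, T * ρ f - ρ (s f) * T = c • ρ (Δ f))
    (lam : A →ₐ[k] k) {v : V} (hv : v ∈ genWt ρ lam) (f : A) :
    ∃ m : ℕ, ρ ((dd lam f) ^ m * (dd (lam.comp s.toAlgHom) f) ^ m) (T v) = 0 := by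
  set g := s f with hg
  have hsg : s g = f := hss f
  set B : A := dd (lam.comp s.toAlgHom) f with hBdef
  have hB : B = s g - algebraMap k A (lam g) := by
    rw [hBdef, dd, hsg]
    rfl
  have hBy : ∀ z : V, ρ B z = ρ (s g) z - lam g • z := by
    intro z
    rw [hB, map_sub, LinearMap.sub_apply, rho_algebraMap_apply]
  have hdy : ∀ z : V, ρ (dd lam g) z = ρ g z - lam g • z := by
    intro z
    rw [dd, map_sub, LinearMap.sub_apply, rho_algebraMap_apply]
  obtain ⟨N, hN⟩ := (mem_genWt_iff ρ lam v).mp hv g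
  have key : ∀ j : ℕ, ∃ w', w' ∈ genWt ρ lam ∧
      ρ (B ^ j) (T v) = T (ρ ((dd lam g) ^ j) v) + w' := by
    intro j
    induction j with
    | zero => exact ⟨0, genWt_zero ρ lam, by simp⟩
    | succ j ih =>
      obtain ⟨w', hw', hj⟩ := ih
      set y := ρ ((dd lam g) ^ j) v with hy
      have hymem : y ∈ genWt ρ lam := genWt_rho ρ lam _ hv
      refine ⟨ρ B w' - c • ρ (Δ g) y, genWt_sub ρ lam (genWt_rho ρ lam _ hw')
        (genWt_smul ρ lam _ (genWt_rho ρ lam _ hymem)), ?_⟩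
      have e1 : ρ (B ^ (j + 1)) (T v) = ρ B (ρ (B ^ j) (T v)) := by
        rw [← rho_mul_apply, ← pow_succ']
      have e2 : ρ ((dd lam g) ^ (j + 1)) v = ρ (dd lam g) y := by
        rw [← rho_mul_apply, ← pow_succ']
      rw [e1, hj, map_add, e2, hdy, map_sub, map_smul, hTg_pointwise ρ hT g y, hBy, hBy]
      abel
  obtain ⟨w', hw', hNkey⟩ := key N
  rw [hN, map_zero, zero_add] at hNkey
  obtain ⟨M, hM⟩ := (mem_genWt_iff ρ lam w').mp hw' f
  refine ⟨N + M, ?_⟩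
  have e : (dd lam f) ^ (N + M) * B ^ (N + M)
      = ((B ^ M * (dd lam f) ^ N) * (dd lam f) ^ M) * B ^ N := by
    ring
  rw [e, rho_mul_apply, rho_mul_apply, hNkey, hM, map_zero]

lemma lemmaM {s : A ≃ₐ[k] A} {Δ : A → A} {a : A} {c : k} {T : Module.End k V}
    (hT : ∀ f, T * ρ f - ρ (s f) * T = c • ρ (Δ f))
    (μ : A →ₐ[k] k) {g : A} (hg : μ g ≠ μ (s g)) (hΔg : a * Δ g = g - s g)
    {x p q : V} (hx : x ∈ genWt ρ μ) (hp : p ∈ genWt ρ μ)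
    (hq : q ∈ genWt ρ (μ.comp s.toAlgHom)) (hTx : T x = p + q) :
    ρ a p = c • x := by
  set ν := μ.comp s.toAlgHom with hν
  have hνg : ν g = μ (s g) := rfl
  set C : A := dd μ g with hC
  set B : A := s g - algebraMap k A (μ g) with hB
  have hCy : ∀ z : V, ρ C z = ρ g z - μ g • z := by
    intro z
    rw [hC, dd, map_sub, LinearMap.sub_apply, rho_algebraMap_apply]
  have hBy : ∀ z : V, ρ B z = ρ (s g) z - μ g • z := by
    intro z
    rw [hB, map_sub, LinearMap.sub_apply, rho_algebraMap_apply]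
  have key : ∀ j : ℕ, ∃ p' q' : V, p' ∈ genWt ρ μ ∧ q' ∈ genWt ρ ν ∧
      T (ρ (C ^ j) x) = p' + q' ∧
      ρ a p' - c • ρ (C ^ j) x = ρ (B ^ j) (ρ a p - c • x) := by
    intro j
    induction j with
    | zero => exact ⟨p, q, hp, hq, by simpa using hTx, by simp⟩
    | succ j ih =>
      obtain ⟨p', q', h1, h2, h3, h4⟩ := ih
      set y := ρ (C ^ j) x with hy
      have hymem : y ∈ genWt ρ μ := genWt_rho ρ μ _ hx
      have e : ρ (C ^ (j + 1)) x = ρ C y := by rw [← rho_mul_apply, ← pow_succ']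
      have eB : ∀ z : V, ρ (B ^ (j + 1)) z = ρ B (ρ (B ^ j) z) := by
        intro z; rw [← rho_mul_apply, ← pow_succ']
      refine ⟨ρ B p' + c • ρ (Δ g) y, ρ B q',
        genWt_add ρ μ (genWt_rho ρ μ _ h1) (genWt_smul ρ μ _ (genWt_rho ρ μ _ hymem)),
        genWt_rho ρ ν _ h2, ?_, ?_⟩
      · rw [e, hCy, map_sub, map_smul, hTg_pointwise ρ hT g y, h3, map_add, hBy, hBy]
        module
      · rw [e, eB, ← h4]
        have ha1 : ρ a (ρ B p') = ρ B (ρ a p') := by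
          rw [← rho_mul_apply, mul_comm, rho_mul_apply]
        have ha2 : ρ a (ρ (Δ g) y) = ρ g y - ρ (s g) y := by
          rw [← rho_mul_apply, hΔg, map_sub, LinearMap.sub_apply]
        rw [map_add, map_smul, ha1, ha2, hCy, hBy (ρ a p'), hBy (ρ a p' - c • y),
          LinearMap.map_sub, LinearMap.map_smul]
        module
  obtain ⟨m, hm⟩ := (mem_genWt_iff ρ μ x).mp hx g
  obtain ⟨p', q', h1, h2, h3, h4⟩ := key m
  rw [hm, map_zero] at h3
  have hp0 : p' = 0 := by
    have hpn : p' = -q' := eq_neg_of_add_eq_zero_left h3.symm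
    exact genWt_disjoint ρ (hνg ▸ hg) h1 (hpn ▸ genWt_neg ρ ν h2)
  rw [hm, hp0, map_zero] at h4
  have hBkill : ρ (B ^ m) (ρ a p - c • x) = 0 := by
    rw [← h4]; simp
  have hY : ρ a p - c • x ∈ genWt ρ μ :=
    genWt_sub ρ μ (genWt_rho ρ μ _ hp) (genWt_smul ρ μ _ hx)
  obtain ⟨m', hm'⟩ := (mem_genWt_iff ρ μ _).mp hY (s g)
  simp only [dd] at hm'
  have h0 : ρ a p - c • x = 0 := kill₂ ρ hg (s g) hBkill hm'
  exact sub_eq_zero.mp h0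

end Aux3

section SymEmbLemmas

variable (k : Type*) [Field k] (n : ℕ)

lemma symEmb_single (i : Fin n) : symEmb k n (Pi.single i 1) = MvPolynomial.X i := by
  unfold symEmb
  rw [Finset.sum_eq_single i]
  · simp
  · intro j _ hj
    rw [Pi.single_eq_of_ne hj]
    simp
  · intro h
    exact absurd (Finset.mem_univ i) h

lemma symEmb_sub (x y : Fin n → ℤ) :
    symEmb k n (x - y) = symEmb k n x - symEmb k n y := by
  unfold symEmb
  rw [← Finset.sum_sub_distrib]
  congr 1
  ext i
  rw [Pi.sub_apply, sub_smul]

lemma symEmb_zsmul (m : ℤ) (x : Fin n → ℤ) :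
    symEmb k n (m • x) = m • symEmb k n x := by
  unfold symEmb
  rw [Finset.smul_sum]
  congr 1
  ext i
  rw [Pi.smul_apply, smul_eq_mul, mul_smul]

end SymEmbLemmas

/-- With `A = S_k(X)`, `α`, `α̌`, `s_α`, `Δ_α`, `ρ`, `c`, `T` as before and
additionally `T∘T = id`: for a weight `λ` with `λ∘s_α ≠ λ`, each `v ∈ V_λ` has a (unique)
decomposition `Tv = w + u` with `w ∈ V_λ`, `u ∈ V_{λ∘s_α}`; writing further `Tu = z + u'`
with `z ∈ V_λ`, `u' ∈ V_{λ∘s_α}`, one has `ρ(α)²(z) = ρ(α²)(v) − c²·v`. -/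
theorem bgg_commutation_involution_formula
    {k : Type*} [Field k] (n : ℕ)
    (α : Fin n → ℤ) (acheck : (Fin n → ℤ) →+ ℤ) (h2 : acheck α = 2)
    (s : MvPolynomial (Fin n) k ≃ₐ[k] MvPolynomial (Fin n) k)
    (hs : ∀ x : Fin n → ℤ, s (symEmb k n x) = symEmb k n (x - acheck x • α))
    (Δ : MvPolynomial (Fin n) k → MvPolynomial (Fin n) k)
    (hΔ : ∀ f, symEmb k n α * Δ f = f - s f)
    {V : Type*} [AddCommGroup V] [Module k V] [FiniteDimensional k V]
    (ρ : MvPolynomial (Fin n) k →ₐ[k] Module.End k V)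
    (c : k) (T : Module.End k V)
    (hT : ∀ f, T * ρ f - ρ (s f) * T = c • ρ (Δ f))
    (hTT : T * T = 1)
    (lam : MvPolynomial (Fin n) k →ₐ[k] k)
    (hlam : lam.comp s.toAlgHom ≠ lam) :
    -- existence of the decomposition of `Tv`:
    (∀ v ∈ genWt ρ lam, ∃ w ∈ genWt ρ lam, ∃ u ∈ genWt ρ (lam.comp s.toAlgHom),
        T v = w + u) ∧
    -- uniqueness of such decompositions:
    (∀ w w' : V, ∀ u u' : V, w ∈ genWt ρ lam → w' ∈ genWt ρ lam →
        u ∈ genWt ρ (lam.comp s.toAlgHom) → u' ∈ genWt ρ (lam.comp s.toAlgHom) →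
        w + u = w' + u' → w = w' ∧ u = u') ∧
    -- the formula `ρ(α)²(z) = ρ(α²)(v) − c²·v`:
    (∀ v ∈ genWt ρ lam, ∀ w z : V, ∀ u u' : V,
        w ∈ genWt ρ lam → u ∈ genWt ρ (lam.comp s.toAlgHom) → T v = w + u →
        z ∈ genWt ρ lam → u' ∈ genWt ρ (lam.comp s.toAlgHom) → T u = z + u' →
        (ρ (symEmb k n α) * ρ (symEmb k n α)) z =
          ρ (symEmb k n α * symEmb k n α) v - (c * c) • v) := by
  classical
  -- s is an involution
  have hss : ∀ f, s (s f) = f := by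
    have hx : ∀ x : Fin n → ℤ, s (s (symEmb k n x)) = symEmb k n x := by
      intro x
      rw [hs, hs]
      congr 1
      have h1 : acheck (x - acheck x • α) = - acheck x := by
        rw [map_sub, map_zsmul, h2]
        simp only [smul_eq_mul]
        ring
      rw [h1, neg_smul, sub_neg_eq_add, sub_add_cancel]
    have hco : s.toAlgHom.comp s.toAlgHom = AlgHom.id k (MvPolynomial (Fin n) k) := by
      apply MvPolynomial.algHom_ext
      intro i
      have := hx (Pi.single i 1)
      rw [symEmb_single] at this
      simpa using this
    intro f
    have := DFunLike.congr_fun hco f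
    simpa using this
  -- the image of α is nonzero
  have ha : symEmb k n α ≠ 0 := by
    intro h0
    apply hlam
    have hsid : ∀ x : Fin n → ℤ, s (symEmb k n x) = symEmb k n x := by
      intro x
      rw [hs, symEmb_sub, symEmb_zsmul, h0, smul_zero, sub_zero]
    apply MvPolynomial.algHom_ext
    intro i
    have := hsid (Pi.single i 1)
    rw [symEmb_single] at this
    simp only [AlgHom.comp_apply]
    rw [show (s.toAlgHom (MvPolynomial.X i)) = s (MvPolynomial.X i) from rfl, this]
  -- s sends α to -α
  have hsa : s (symEmb k n α) = -(symEmb k n α) := by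
    rw [hs α, h2]
    have e : α - (2 : ℤ) • α = (-1 : ℤ) • α := by
      ext j
      simp only [Pi.sub_apply, Pi.smul_apply, smul_eq_mul]
      ring
    rw [e, symEmb_zsmul]
    simp
  -- Δ of α is 2
  have hΔa : Δ (symEmb k n α) = 2 := by
    have h := hΔ (symEmb k n α)
    rw [hsa, sub_neg_eq_add] at h
    have h2' : symEmb k n α * Δ (symEmb k n α) = symEmb k n α * 2 := by
      rw [h]; ring
    exact mul_left_cancel₀ ha h2'
  -- a separating element
  obtain ⟨g₀, hg₀⟩ := DFunLike.ne_iff.mp hlam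
  have hg1 : lam (s g₀) ≠ lam g₀ := by simpa using hg₀
  have hg2 : lam g₀ ≠ lam (s g₀) := hg1.symm
  have hgcomp : lam g₀ ≠ (lam.comp s.toAlgHom) g₀ := by simpa using hg2
  have hcomp : (lam.comp s.toAlgHom).comp s.toAlgHom = lam := by
    apply AlgHom.ext
    intro f
    simp [hss f]
  refine ⟨?_, ?_, ?_⟩
  · -- existence
    intro v hv
    obtain ⟨w, hw, u, hu, hx⟩ :=
      splitWt ρ (μ := lam) (ν := lam.comp s.toAlgHom) hgcomp
        (fun f => tshift ρ hss hT lam hv f)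
    exact ⟨w, hw, u, hu, hx⟩
  · -- uniqueness
    intro w w' u u' hw hw' hu hu' heq
    have h1 : w - w' = u' - u := by
      rw [sub_eq_sub_iff_add_eq_add, heq]
      exact add_comm _ _
    have hmem1 : w - w' ∈ genWt ρ lam := genWt_sub ρ lam hw hw'
    have hmem2 : w - w' ∈ genWt ρ (lam.comp s.toAlgHom) :=
      h1 ▸ genWt_sub ρ _ hu' hu
    have h0 : w - w' = 0 := genWt_disjoint ρ hgcomp hmem1 hmem2
    refine ⟨sub_eq_zero.mp h0, ?_⟩
    have : u' - u = 0 := by rw [← h1, h0]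
    exact (sub_eq_zero.mp this).symm
  · -- the formula
    intro v hv w z u u' hw hu hTv hz hu' hTu
    have hA : ρ (symEmb k n α) w = c • v :=
      lemmaM ρ hT lam (g := g₀) hg2 (hΔ g₀) hv hw hu hTv
    have hgν : (lam.comp s.toAlgHom) g₀ ≠ (lam.comp s.toAlgHom) (s g₀) := by
      show lam (s g₀) ≠ lam (s (s g₀))
      rw [hss g₀]
      exact hg1
    have hz' : z ∈ genWt ρ ((lam.comp s.toAlgHom).comp s.toAlgHom) := by
      rw [hcomp]
      exact hz
    have hTu' : T u = u' + z := by
      rw [hTu]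
      exact add_comm z u'
    have hB : ρ (symEmb k n α) u' = c • u :=
      lemmaM ρ hT (lam.comp s.toAlgHom) (g := g₀) hgν (hΔ g₀) hu hu' hz' hTu'
    have hTTv : ∀ y : V, T (T y) = y := by
      intro y
      have := congrArg (fun L : Module.End k V => L y) hTT
      simpa using this
    have hstar : ∀ y : V, T (ρ (symEmb k n α) y) =
        c • y + c • y - ρ (symEmb k n α) (T y) := by
      intro y
      have h := hTg_pointwise ρ hT (symEmb k n α) y
      rw [hΔa, hsa, map_neg] at h
      have h2y : ρ (2 : MvPolynomial (Fin n) k) y = y + y := by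
        rw [show (2 : MvPolynomial (Fin n) k) = 1 + 1 by norm_num, map_add, map_one]
        simp [LinearMap.add_apply]
      rw [h, h2y, LinearMap.neg_apply]
      module
    have hE1 : ρ (symEmb k n α) u = c • v - T (ρ (symEmb k n α) v) := by
      have hd : ρ (symEmb k n α) (T v) = ρ (symEmb k n α) w + ρ (symEmb k n α) u := by
        rw [hTv, map_add]
      have h' := hstar v
      rw [hd, hA] at h'
      rw [h']
      module
    have hE2 : ρ (symEmb k n α) z = c • u - T (ρ (symEmb k n α) u) := by
      have hd : ρ (symEmb k n α) (T u) = ρ (symEmb k n α) z + ρ (symEmb k n α) u' := by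
        rw [hTu, map_add]
      have h' := hstar u
      rw [hd, hB] at h'
      rw [h']
      module
    have hE4 : ρ (symEmb k n α) (ρ (symEmb k n α) u)
        = T (ρ (symEmb k n α) (ρ (symEmb k n α) v)) - c • ρ (symEmb k n α) v := by
      have g1 : ρ (symEmb k n α) (ρ (symEmb k n α) u)
          = c • ρ (symEmb k n α) v - ρ (symEmb k n α) (T (ρ (symEmb k n α) v)) := by
        rw [hE1, map_sub, map_smul]
      have g2 := hstar (ρ (symEmb k n α) v)
      have g3 : ρ (symEmb k n α) (T (ρ (symEmb k n α) v))
          = c • ρ (symEmb k n α) v + c • ρ (symEmb k n α) v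
            - T (ρ (symEmb k n α) (ρ (symEmb k n α) v)) := by
        rw [g2]; module
      rw [g1, g3]; module
    have hE3 : ρ (symEmb k n α) (ρ (symEmb k n α) z)
        = T (ρ (symEmb k n α) (ρ (symEmb k n α) u)) - c • ρ (symEmb k n α) u := by
      have g1 : ρ (symEmb k n α) (ρ (symEmb k n α) z)
          = c • ρ (symEmb k n α) u - ρ (symEmb k n α) (T (ρ (symEmb k n α) u)) := by
        rw [hE2, map_sub, map_smul]
      have g2 := hstar (ρ (symEmb k n α) u)
      have g3 : ρ (symEmb k n α) (T (ρ (symEmb k n α) u))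
          = c • ρ (symEmb k n α) u + c • ρ (symEmb k n α) u
            - T (ρ (symEmb k n α) (ρ (symEmb k n α) u)) := by
        rw [g2]; module
      rw [g1, g3]; module
    have final : ρ (symEmb k n α) (ρ (symEmb k n α) z)
        = ρ (symEmb k n α) (ρ (symEmb k n α) v) - (c * c) • v := by
      rw [hE3, hE4, map_sub, map_smul, hTTv, hE1]
      rw [show ((c * c) • v : V) = c • (c • v) from (smul_smul c c v).symm]
      module
    rw [Module.End.mul_apply, rho_mul_apply]
    exact final
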